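/- arXiv:1812.03345 — 3 statements merged into one kernel-verified Lean document; each statement's English description precedes it below -/
import Mathlib

section
/- Let n ≥ 1 and let λ = (λ_1 ≥ … ≥ λ_n ≥ 0) be a partition with integer parts. Then every extreme point of the Gelfand–Tsetlin polytope GT(λ) has all coordinates in ℤ; that is, GT(λ) is a lattice polytope. -/
/-!
If some entry of a Gelfand–Tsetlin pattern `x` has a non-integral value `v`, move all entries
equal to `v` simultaneously by `±ε`, leaving the others fixed. Since the pattern has finitely
many values, for small `ε` this map of values is monotone on them, so it preserves all the
interlacing inequalities; it fixes `0` and the integral top row. Hence `x` is the midpoint of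
two distinct patterns of `GT(λ)` and is not an extreme point.
-/

/-- The Gelfand–Tsetlin polytope `GT(lam)` realized as a set of functions
`x : ℕ → ℕ → ℝ`: the meaningful coordinates are `x i j` for `1 ≤ j ≤ i ≤ n`
(row `i` has entries `x i 1, …, x i i`), all other values vanish, the interlacing
inequalities `x (i+1) j ≥ x i j` and `x i j ≥ x (i+1) (j+1)` hold, and the top row
is `x n j = lam j`. -/
def GTSet (n : ℕ) (lam : Fin n → ℝ) : Set (ℕ → ℕ → ℝ) :=
  {x | (∀ i j, x i j ≠ 0 → 1 ≤ j ∧ j ≤ i ∧ i ≤ n) ∧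
    (∀ i j, 1 ≤ j → j ≤ i → i + 1 ≤ n → x i j ≤ x (i + 1) j ∧ x (i + 1) (j + 1) ≤ x i j) ∧
    (∀ j : Fin n, x n (j.1 + 1) = lam j)}

lemma Set.Finite.exists_pos_le_dist {X : Type*} [MetricSpace X] {s : Set X} (hs : s.Finite)
    (v : X) : ∃ ε > 0, ∀ u ∈ s, u ≠ v → ε ≤ dist u v := by
  have hopen : IsOpen (s \ {v})ᶜ := hs.sdiff.isClosed.isOpen_compl
  obtain ⟨ε, hε, hball⟩ := Metric.isOpen_iff.1 hopen v (by simp)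
  refine ⟨ε, hε, fun u hu huv => ?_⟩
  by_contra! hlt
  exact hball (Metric.mem_ball.2 hlt) ⟨hu, huv⟩

lemma monotoneOn_update_id {α : Type*} [AddCommGroup α] [LinearOrder α] [IsOrderedAddMonoid α]
    {s : Set α} {v t : α} (hgap : ∀ u ∈ s, u ≠ v → |t| ≤ |u - v|) :
    MonotoneOn (Function.update id v (v + t)) s := by
  intro a ha b hb hab
  rcases eq_or_ne a v with rfl | hav <;> rcases eq_or_ne b a with rfl | hba
  · exact le_rfl
  · have hgap_b := (le_abs_self t).trans (hgap b hb hba)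
    rw [abs_of_nonneg (sub_nonneg.2 hab)] at hgap_b
    rw [Function.update_self, Function.update_of_ne hba]
    exact le_sub_iff_add_le'.1 hgap_b
  · exact le_rfl
  rcases eq_or_ne b v with rfl | hbv
  · have hgap_a := (neg_le_abs t).trans (hgap a ha hav)
    rw [abs_of_nonpos (sub_nonpos.2 hab), neg_le_neg_iff] at hgap_a
    rw [Function.update_self, Function.update_of_ne hav]
    exact sub_le_iff_le_add'.1 hgap_a
  · simpa [Function.update_of_ne hav, Function.update_of_ne hbv] using hab

lemma GTSet.finite_range {n : ℕ} {lam : Fin n → ℝ} {x : ℕ → ℕ → ℝ} (hx : x ∈ GTSet n lam) :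
    (Set.range (Function.uncurry x)).Finite := by
  refine (((Set.finite_Iic n).prod (Set.finite_Iic n)).image (Function.uncurry x)).insert 0
    |>.subset ?_
  rintro _ ⟨⟨i, j⟩, rfl⟩
  by_cases h : x i j = 0
  · exact Or.inl h
  · obtain ⟨-, hji, hin⟩ := hx.1 i j h
    exact Or.inr ⟨(i, j), ⟨hin, Set.mem_Iic.2 (hji.trans hin)⟩, rfl⟩

lemma GTSet.comp_mem {n : ℕ} {lam : Fin n → ℝ} {x : ℕ → ℕ → ℝ} (hx : x ∈ GTSet n lam)
    {f : ℝ → ℝ} (hf : MonotoneOn f (Set.range (Function.uncurry x))) (hf0 : f 0 = 0)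
    (hflam : ∀ j, f (lam j) = lam j) : (fun i j => f (x i j)) ∈ GTSet n lam := by
  obtain ⟨hsupp, hineq, htop⟩ := hx
  have hmem : ∀ i j, x i j ∈ Set.range (Function.uncurry x) := fun i j => ⟨(i, j), rfl⟩
  refine ⟨fun i j hne => hsupp i j fun h => hne (by simp only [h, hf0]), fun i j h1 h2 h3 => ?_,
    fun j => by simp only [htop, hflam]⟩
  obtain ⟨hleft, hright⟩ := hineq i j h1 h2 h3
  exact ⟨hf (hmem _ _) (hmem _ _) hleft, hf (hmem _ _) (hmem _ _) hright⟩

lemma update_id_add_update_id_sub_eq_two_mul (v t u : ℝ) :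
    Function.update id v (v + t) u + Function.update id v (v - t) u = 2 * u := by
  rcases eq_or_ne u v with rfl | huv
  · simp only [Function.update_self]; ring
  · simp only [Function.update_of_ne huv, id]; ring

theorem gtSet_extremePoints_integral_general (n : ℕ) (lam : Fin n → ℕ) :
    ∀ x ∈ Set.extremePoints ℝ (GTSet n (fun j => (lam j : ℝ))),
      ∀ i j : ℕ, ∃ m : ℤ, x i j = (m : ℝ) := by
  intro x ⟨hxGT, hext⟩ i j
  by_contra! hv
  set v := x i j
  obtain ⟨ε, hε, hgap⟩ := (GTSet.finite_range hxGT).exists_pos_le_dist v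
  let shift (t : ℝ) : ℕ → ℕ → ℝ := fun i j => Function.update id v (v + t) (x i j)
  have hshift : ∀ t, |t| ≤ ε → shift t ∈ GTSet n (fun j => (lam j : ℝ)) := fun t ht =>
    GTSet.comp_mem hxGT (monotoneOn_update_id fun u hu huv => ht.trans (Real.dist_eq u v ▸ hgap u hu huv))
      (Function.update_of_ne (fun h => hv 0 (by simp [← h])) _ _)
      (fun k => Function.update_of_ne (fun h => hv (lam k) (by simp [← h])) _ _)
  have hmid : x ∈ openSegment ℝ (shift ε) (shift (-ε)) := by
    refine ⟨1 / 2, 1 / 2, by norm_num, by norm_num, by norm_num, funext₂ fun i j => ?_⟩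
    have hsum := update_id_add_update_id_sub_eq_two_mul v ε (x i j)
    simp only [shift, Pi.add_apply, Pi.smul_apply, smul_eq_mul, ← sub_eq_add_neg]
    linarith
  have hfix := congrFun₂ (hext (hshift ε (abs_of_pos hε).le)
    (hshift (-ε) (by rw [abs_neg, abs_of_pos hε])) hmid) i j
  change Function.update id v (v + ε) v = v at hfix
  rw [Function.update_self] at hfix
  linarith

/-- Every extreme point of the Gelfand–Tsetlin polytope of an integer partition
has integer coordinates, i.e. `GT(λ)` is a lattice polytope. -/
theorem gtSet_extremePoints_integral (n : ℕ) (hn : 1 ≤ n) (lam : Fin n → ℕ)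
    (hlam : Antitone lam) :
    ∀ x ∈ Set.extremePoints ℝ (GTSet n (fun j => (lam j : ℝ))),
      ∀ i j : ℕ, ∃ m : ℤ, x i j = (m : ℝ) :=
  gtSet_extremePoints_integral_general n lam
end

section
/- Let n ≥ 2 and let σ be a permutation in the symmetric group S_n. If (i_1, …, i_ℓ) and (j_1, …, j_ℓ) are two reduced words for σ, then the corresponding composites of Demazure operators on ℚ[z_1, …, z_n] coincide: π_{i_1} ∘ π_{i_2} ∘ ⋯ ∘ π_{i_ℓ} = π_{j_1} ∘ π_{j_2} ∘ ⋯ ∘ π_{j_ℓ}. Hence the operator π_σ is well defined independently of the chosen reduced word. -/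
open MvPolynomial
open scoped Classical

/-- The Demazure operator `π_i(f) = ∂_i(z_i · f)` on `ℚ[z_1, …, z_n]`, where
`∂_i(h) = (h − s_i(h))/(z_i − z_{i+1})` and `s_i` swaps the variables `z_i` and
`z_{i+1}` (indices are `0`-based, so `i` ranges over `0, …, n − 2`).  Since
`z_i − z_{i+1}` always divides `z_i·f − s_i(z_i·f)` and quotients are unique in the
integral domain `ℚ[z_1, …, z_n]`, the value below is the unique polynomial `g` with
`(z_i − z_{i+1})·g = z_i·f − s_i(z_i·f)`. -/
noncomputable def piOp (n : ℕ) (i : ℕ) (f : MvPolynomial (Fin n) ℚ) :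
    MvPolynomial (Fin n) ℚ :=
  if h : i + 1 < n then
    @dite _ (∃ g : MvPolynomial (Fin n) ℚ,
        (X (⟨i, Nat.lt_of_succ_lt h⟩ : Fin n) - X ⟨i + 1, h⟩) * g =
          X (⟨i, Nat.lt_of_succ_lt h⟩ : Fin n) * f -
            rename (Equiv.swap (⟨i, Nat.lt_of_succ_lt h⟩ : Fin n) ⟨i + 1, h⟩)
              (X (⟨i, Nat.lt_of_succ_lt h⟩ : Fin n) * f)) (Classical.propDecidable _)
      (fun hg => hg.choose) (fun _ => 0)
  else 0


/-- The simple transposition `s_i ∈ S_n` swapping `i` and `i + 1`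
(`0`-based, so `i` ranges over `0, …, n − 2`). -/
def sT (n : ℕ) (i : ℕ) : Equiv.Perm (Fin n) :=
  if h : i + 1 < n then Equiv.swap ⟨i, Nat.lt_of_succ_lt h⟩ ⟨i + 1, h⟩ else 1

/-- The number of inversions (Coxeter length) of a permutation of `Fin n`. -/
def invCount {n : ℕ} (σ : Equiv.Perm (Fin n)) : ℕ :=
  (Finset.univ.filter (fun p : Fin n × Fin n => p.1 < p.2 ∧ σ p.2 < σ p.1)).card

/-- `w = (i_1, …, i_ℓ)` is a reduced word for `σ ∈ S_n`: all letters are valid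
(`0`-based: `i + 1 < n`), `σ = s_{i_1} s_{i_2} ⋯ s_{i_ℓ}`, and `ℓ` equals the number
of inversions of `σ`. -/
def IsReducedWordFor (n : ℕ) (σ : Equiv.Perm (Fin n)) (w : List ℕ) : Prop :=
  (∀ i ∈ w, i + 1 < n) ∧ (w.map (sT n)).prod = σ ∧ w.length = invCount σ

/-- The composite `π_{i_1} ∘ π_{i_2} ∘ ⋯ ∘ π_{i_ℓ}` applied to `f`. -/
noncomputable def piWord (n : ℕ) (w : List ℕ) (f : MvPolynomial (Fin n) ℚ) :
    MvPolynomial (Fin n) ℚ :=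
  w.foldr (piOp n) f

/-!
Induct on the length of `σ`. The first letter `i` of a reduced word for `σ` is a left descent of
`σ`, and the rest of the word is a reduced word for `s_i σ`. So for reduced words starting with
`i` and with `j` it suffices to find reduced words `i x` and `j y` for `σ` with
`π_i π_x = π_j π_y`. For `i = j` take `x = y`. Otherwise `σ` also has a reduced word starting
with the longest element of `⟨s_i, s_j⟩`, namely `i j` and `j i` when `|i - j| ≥ 2`, and
`i (i+1) i` and `(i+1) i (i+1)` when `j = i + 1`; the two composites then agree by the commutation
and braid relations of Demazure operators. These relations are checked after clearing the
denominators, since `π_i f` is the unique `g` with `(z_i - z_{i+1}) g = z_i f - z_{i+1} s_i(f)`.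
-/

open Equiv

theorem MvPolynomial.X_sub_X_ne_zero {R σ : Type*} [CommRing R] [Nontrivial R] {a b : σ}
    (hab : a ≠ b) : (X a - X b : MvPolynomial σ R) ≠ 0 :=
  sub_ne_zero.mpr (X_injective.ne hab)

theorem MvPolynomial.sub_dvd_sub_rename_swap {R σ : Type*} [CommRing R] [DecidableEq σ]
    (a b : σ) (f : MvPolynomial σ R) : X a - X b ∣ f - rename (swap a b) f := by
  set I := Ideal.span {(X a - X b : MvPolynomial σ R)}
  have hab : Ideal.Quotient.mk I (X a) = Ideal.Quotient.mk I (X b) :=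
    Ideal.Quotient.eq.mpr (Ideal.mem_span_singleton_self _)
  have h : (Ideal.Quotient.mkₐ R I).comp (rename (swap a b)) = Ideal.Quotient.mkₐ R I := by
    ext x
    simp only [AlgHom.comp_apply, rename_X, Ideal.Quotient.mkₐ_eq_mk]
    rcases eq_or_ne x a with rfl | hxa
    · rw [swap_apply_left, hab]
    rcases eq_or_ne x b with rfl | hxb
    · rw [swap_apply_right, hab]
    rw [swap_apply_of_ne_of_ne hxa hxb]
  rw [← Ideal.mem_span_singleton, ← Ideal.Quotient.eq]
  exact (DFunLike.congr_fun h f).symm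

theorem Equiv.swap_braid {α : Type*} [DecidableEq α] {p q r : α} (hpq : p ≠ q) (hpr : p ≠ r)
    (hqr : q ≠ r) : swap p q * swap q r * swap p q = swap q r * swap p q * swap q r := by
  rw [swap_mul_swap_mul_swap hpq hpr, swap_comm p q, swap_comm q r,
    swap_mul_swap_mul_swap hqr.symm hpr.symm, swap_comm]

theorem Fin.swap_apply_of_val_ne {n : ℕ} {a b x : Fin n} (ha : (x : ℕ) ≠ a) (hb : (x : ℕ) ≠ b) :
    swap a b x = x :=
  swap_apply_of_ne_of_ne (Fin.ne_of_val_ne ha) (Fin.ne_of_val_ne hb)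

section

variable {n : ℕ}

theorem sT_eq_swap {a b : Fin n} (hab : (b : ℕ) = a + 1) : sT n a = swap a b := by
  have h : (a : ℕ) + 1 < n := hab ▸ b.isLt
  obtain rfl : b = ⟨a + 1, h⟩ := Fin.ext hab
  exact dif_pos h

theorem mul_piOp {a b : Fin n} (hab : (b : ℕ) = a + 1) (f : MvPolynomial (Fin n) ℚ) :
    (X a - X b) * piOp n a f = X a * f - X b * rename (swap a b) f := by
  have h : (a : ℕ) + 1 < n := hab ▸ b.isLt
  obtain rfl : b = ⟨a + 1, h⟩ := Fin.ext hab
  have hex : ∃ g, (X a - X ⟨a + 1, h⟩) * g =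
      X a * f - rename (swap a ⟨a + 1, h⟩) (X a * f) :=
    (sub_dvd_sub_rename_swap a _ _).imp fun _ hg => hg.symm
  rw [piOp, dif_pos h, dif_pos hex, hex.choose_spec, map_mul, rename_X, swap_apply_left]

theorem rename_mul_piOp {a b : Fin n} (hab : (b : ℕ) = a + 1) (τ : Perm (Fin n))
    (f : MvPolynomial (Fin n) ℚ) :
    (X (τ a) - X (τ b)) * rename τ (piOp n a f) =
      X (τ a) * rename τ f - X (τ b) * rename (τ * swap a b) f := by
  simpa only [map_sub, map_mul, rename_X, rename_rename, Perm.coe_mul] using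
    congrArg (rename τ) (mul_piOp hab f)

theorem rename_swap_piOp {a b : Fin n} (hab : (b : ℕ) = a + 1) (f : MvPolynomial (Fin n) ℚ) :
    rename (swap a b) (piOp n a f) = piOp n a f := by
  have h₁ := mul_piOp hab f
  have h₂ := rename_mul_piOp hab (swap a b) f
  rw [swap_apply_left, swap_apply_right, swap_mul_self, Perm.coe_one, rename_id_apply] at h₂
  refine mul_left_cancel₀ (X_sub_X_ne_zero (Fin.ne_of_val_ne (by omega) : a ≠ b)) ?_
  linear_combination -h₂ - h₁

theorem piOp_comm {a a' b b' : Fin n} (ha : (a' : ℕ) = a + 1) (hb : (b' : ℕ) = b + 1)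
    (hfar : (a : ℕ) + 2 ≤ b ∨ (b : ℕ) + 2 ≤ a) (f : MvPolynomial (Fin n) ℚ) :
    piOp n a (piOp n b f) = piOp n b (piOp n a f) := by
  have haa' : a ≠ a' := Fin.ne_of_val_ne (by omega)
  have hbb' : b ≠ b' := Fin.ne_of_val_ne (by omega)
  have hsb : swap a a' b = b := Fin.swap_apply_of_val_ne (by omega) (by omega)
  have hsb' : swap a a' b' = b' := Fin.swap_apply_of_val_ne (by omega) (by omega)
  have hta : swap b b' a = a := Fin.swap_apply_of_val_ne (by omega) (by omega)
  have hta' : swap b b' a' = a' := Fin.swap_apply_of_val_ne (by omega) (by omega)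
  have hst : swap a a' * swap b b' = swap b b' * swap a a' :=
    (Perm.disjoint_swap_swap (by simp [Fin.ext_iff]; omega)).commute.eq
  have e₁ := mul_piOp hb f
  have e₂ := mul_piOp ha (piOp n b f)
  have e₃ := rename_mul_piOp hb (swap a a') f
  have e₄ := mul_piOp ha f
  have e₅ := mul_piOp hb (piOp n a f)
  have e₆ := rename_mul_piOp ha (swap b b') f
  rw [hsb, hsb'] at e₃
  rw [hta, hta', ← hst] at e₆
  refine mul_left_cancel₀ (mul_ne_zero (X_sub_X_ne_zero haa') (X_sub_X_ne_zero hbb')) ?_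
  linear_combination (X b - X b') * e₂ + X a * e₁ - X a' * e₃
    - (X a - X a') * e₅ - X b * e₄ + X b' * e₆

theorem piOp_braid {p q r : Fin n} (hpq : (q : ℕ) = p + 1) (hqr : (r : ℕ) = q + 1)
    (f : MvPolynomial (Fin n) ℚ) :
    piOp n p (piOp n q (piOp n p f)) = piOp n q (piOp n p (piOp n q f)) := by
  have hpq' : p ≠ q := Fin.ne_of_val_ne (by omega)
  have hpr' : p ≠ r := Fin.ne_of_val_ne (by omega)
  have hqr' : q ≠ r := Fin.ne_of_val_ne (by omega)
  have hsr : swap p q r = r := swap_apply_of_ne_of_ne hpr'.symm hqr'.symm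
  have htp : swap q r p = p := swap_apply_of_ne_of_ne hpq' hpr'
  have hbraid := swap_braid hpq' hpr' hqr'
  have eL₁ := mul_piOp hpq f
  have eL₂ := mul_piOp hqr (piOp n p f)
  have eL₃ := mul_piOp hpq (piOp n q (piOp n p f))
  have eL₄ := rename_mul_piOp hpq (swap q r) f
  have eL₅ := rename_mul_piOp hpq (swap p q * swap q r) f
  have eL₆ := rename_mul_piOp hqr (swap p q) (piOp n p f)
  have eR₁ := mul_piOp hqr f
  have eR₂ := mul_piOp hpq (piOp n q f)
  have eR₃ := mul_piOp hqr (piOp n p (piOp n q f))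
  have eR₄ := rename_mul_piOp hqr (swap p q) f
  have eR₅ := rename_mul_piOp hqr (swap q r * swap p q) f
  have eR₆ := rename_mul_piOp hpq (swap q r) (piOp n q f)
  simp only [Perm.mul_apply, swap_apply_left, swap_apply_right, hsr, htp, rename_swap_piOp hpq,
    rename_swap_piOp hqr, hbraid] at eL₄ eL₅ eL₆ eR₄ eR₅ eR₆
  -- Multiplied by `(z_p - z_q)(z_q - z_r)(z_p - z_r)`, both sides become
  -- `∑_{w ∈ S_{p,q,r}} sign(w) · w(z_p² z_q f)`.
  refine mul_left_cancel₀ (mul_ne_zero (mul_ne_zero (X_sub_X_ne_zero hpq')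
    (X_sub_X_ne_zero hqr')) (X_sub_X_ne_zero hpr')) ?_
  linear_combination (X q - X r) * (X p - X r) * eL₃ + X p * (X p - X r) * eL₂
    - X q * (X q - X r) * eL₆ + X p * X q * eL₁ - X p * X r * eL₄ + X q * X r * eL₅
    - ((X p - X q) * (X p - X r) * eR₃ + X q * (X p - X r) * eR₂
      - X r * (X p - X q) * eR₆ + X p ^ 2 * eR₁ - X q ^ 2 * eR₄ + X r ^ 2 * eR₅)

theorem exists_adjacent_fin {i : ℕ} (h : i + 1 < n) :
    ∃ a b : Fin n, (a : ℕ) = i ∧ (b : ℕ) = a + 1 :=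
  ⟨⟨i, by omega⟩, ⟨i + 1, h⟩, rfl, rfl⟩

theorem sT_mul_self (i : ℕ) : sT n i * sT n i = 1 := by
  unfold sT
  split_ifs <;> simp

def inversions (σ : Perm (Fin n)) : Finset (Fin n × Fin n) :=
  Finset.univ.filter fun p => p.1 < p.2 ∧ σ p.2 < σ p.1

theorem invCount_eq_card_inversions (σ : Perm (Fin n)) : invCount σ = (inversions σ).card :=
  rfl

theorem mem_inversions {σ : Perm (Fin n)} {x y : Fin n} :
    (x, y) ∈ inversions σ ↔ x < y ∧ σ y < σ x := by
  simp [inversions]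

theorem invCount_one : invCount (1 : Perm (Fin n)) = 0 := by
  rw [invCount_eq_card_inversions, Finset.card_eq_zero]
  exact Finset.filter_false_of_mem fun p _ h => lt_asymm h.1 h.2

theorem swap_lt_swap_iff {a b u v : Fin n} (hab : (b : ℕ) = a + 1) (h₁ : ¬(u = a ∧ v = b))
    (h₂ : ¬(u = b ∧ v = a)) : swap a b u < swap a b v ↔ u < v := by
  rw [Fin.lt_def, Fin.lt_def, swap_apply_def, swap_apply_def]
  simp only [Fin.ext_iff] at h₁ h₂ ⊢
  split_ifs <;> omega

theorem inversions_swap_mul {a b : Fin n} (hab : (b : ℕ) = a + 1) {σ : Perm (Fin n)}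
    (h : σ⁻¹ a < σ⁻¹ b) :
    inversions (swap a b * σ) = insert (σ⁻¹ a, σ⁻¹ b) (inversions σ) := by
  have hne : a ≠ b := Fin.ne_of_val_ne (by omega)
  ext ⟨x, y⟩
  obtain ⟨u, rfl⟩ := σ⁻¹.surjective x
  obtain ⟨v, rfl⟩ := σ⁻¹.surjective y
  simp only [Finset.mem_insert, mem_inversions, Prod.mk.injEq, Perm.mul_apply,
    Perm.coe_inv, Equiv.apply_symm_apply, EmbeddingLike.apply_eq_iff_eq] at h ⊢
  by_cases hu : u = a ∧ v = b
  · obtain ⟨rfl, rfl⟩ := hu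
    simp [h, Fin.lt_def, hab]
  by_cases hv : u = b ∧ v = a
  · obtain ⟨rfl, rfl⟩ := hv
    simp [h.not_gt, hne]
  rw [swap_lt_swap_iff hab (by tauto) (by tauto)]
  simp [hu]

theorem invCount_swap_mul_of_lt {a b : Fin n} (hab : (b : ℕ) = a + 1) {σ : Perm (Fin n)}
    (h : σ⁻¹ a < σ⁻¹ b) : invCount (swap a b * σ) = invCount σ + 1 := by
  rw [invCount_eq_card_inversions, inversions_swap_mul hab h, Finset.card_insert_of_notMem]
  · rfl
  · simp [mem_inversions, Fin.le_def, hab]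

theorem invCount_swap_mul_of_gt {a b : Fin n} (hab : (b : ℕ) = a + 1) {σ : Perm (Fin n)}
    (h : σ⁻¹ b < σ⁻¹ a) : invCount (swap a b * σ) + 1 = invCount σ := by
  have := invCount_swap_mul_of_lt hab (σ := swap a b * σ) (by simpa [mul_inv_rev] using h)
  rwa [← mul_assoc, swap_mul_self, one_mul, eq_comm] at this

theorem invCount_sT_mul_le (i : ℕ) (σ : Perm (Fin n)) :
    invCount (sT n i * σ) ≤ invCount σ + 1 := by
  by_cases h : i + 1 < n
  · obtain ⟨a, b, rfl, hab⟩ := exists_adjacent_fin h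
    rw [sT_eq_swap hab]
    rcases lt_or_gt_of_ne (σ⁻¹.injective.ne (Fin.ne_of_val_ne (by omega) : a ≠ b)) with hlt | hgt
    · exact (invCount_swap_mul_of_lt hab hlt).le
    · have := invCount_swap_mul_of_gt hab hgt
      omega
  · rw [sT, dif_neg h, one_mul]
    omega

theorem invCount_prod_le (w : List ℕ) : invCount (w.map (sT n)).prod ≤ w.length := by
  induction w with
  | nil => simp [invCount_one]
  | cons i w ih =>
    simpa using (invCount_sT_mul_le i _).trans (Nat.add_le_add_right ih 1)

def IsLeftDescent (σ : Perm (Fin n)) (i : ℕ) : Prop :=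
  ∃ a b : Fin n, (a : ℕ) = i ∧ (b : ℕ) = a + 1 ∧ σ⁻¹ b < σ⁻¹ a

theorem isLeftDescent_iff {a b : Fin n} (hab : (b : ℕ) = a + 1) {σ : Perm (Fin n)} :
    IsLeftDescent σ a ↔ σ⁻¹ b < σ⁻¹ a := by
  refine ⟨fun ⟨a', b', ha, hb, h⟩ => ?_, fun h => ⟨a, b, rfl, hab, h⟩⟩
  obtain rfl := Fin.ext ha
  obtain rfl : b' = b := Fin.ext (by omega)
  exact h

theorem IsLeftDescent.succ_lt {σ : Perm (Fin n)} {i : ℕ} (h : IsLeftDescent σ i) : i + 1 < n := by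
  obtain ⟨a, b, rfl, hab, -⟩ := h
  omega

theorem invCount_sT_mul_of_isLeftDescent {σ : Perm (Fin n)} {i : ℕ} (h : IsLeftDescent σ i) :
    invCount (sT n i * σ) + 1 = invCount σ := by
  obtain ⟨a, b, rfl, hab, h⟩ := h
  rw [sT_eq_swap hab]
  exact invCount_swap_mul_of_gt hab h

theorem isReducedWordFor_cons_iff {σ : Perm (Fin n)} {i : ℕ} {w : List ℕ} :
    IsReducedWordFor n σ (i :: w) ↔ IsLeftDescent σ i ∧ IsReducedWordFor n (sT n i * σ) w := by
  constructor
  · rintro ⟨hval, hprod, hlen⟩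
    rw [List.forall_mem_cons] at hval
    rw [List.map_cons, List.prod_cons] at hprod
    rw [List.length_cons] at hlen
    have hw : (w.map (sT n)).prod = sT n i * σ := by
      rw [← hprod, ← mul_assoc, sT_mul_self, one_mul]
    have hle := invCount_prod_le (n := n) w
    rw [hw] at hle
    obtain ⟨a, b, rfl, hab⟩ := exists_adjacent_fin hval.1
    rw [sT_eq_swap hab] at hle ⊢
    rcases lt_or_gt_of_ne (σ⁻¹.injective.ne (Fin.ne_of_val_ne (by omega) : a ≠ b)) with hlt | hgt
    · have := invCount_swap_mul_of_lt hab hlt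
      omega
    · have := invCount_swap_mul_of_gt hab hgt
      exact ⟨(isLeftDescent_iff hab).2 hgt, hval.2, by rw [hw, sT_eq_swap hab], by omega⟩
  · rintro ⟨hd, hval, hprod, hlen⟩
    refine ⟨List.forall_mem_cons.2 ⟨hd.succ_lt, hval⟩, ?_, ?_⟩
    · rw [List.map_cons, List.prod_cons, hprod, ← mul_assoc, sT_mul_self, one_mul]
    · rw [List.length_cons, hlen, invCount_sT_mul_of_isLeftDescent hd]

theorem exists_isLeftDescent {σ : Perm (Fin n)} (hσ : σ ≠ 1) : ∃ i, IsLeftDescent σ i := by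
  by_contra! hnone
  refine hσ (inv_eq_one.mp ?_)
  have hmono : StrictMono ⇑σ⁻¹ := (strictMono_iff_forall_covBy _).2 fun a b hab => by
    have hab' : (b : ℕ) = a + 1 := (Nat.covBy_iff_add_one_eq.1 (Fin.covBy_iff.1 hab)).symm
    exact (σ⁻¹.injective.ne hab.ne).lt_of_le
      (not_lt.1 fun h => hnone a ((isLeftDescent_iff hab').2 h))
  exact Equiv.ext fun x => congrArg (· x)
    (Subsingleton.elim (hmono.orderIsoOfSurjective _ σ⁻¹.surjective) (OrderIso.refl _))

theorem exists_isReducedWordFor (σ : Perm (Fin n)) : ∃ w, IsReducedWordFor n σ w := by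
  induction hm : invCount σ using Nat.strong_induction_on generalizing σ with
  | _ m ih =>
  rcases eq_or_ne σ 1 with rfl | hσ
  · exact ⟨[], by simp, rfl, invCount_one.symm⟩
  · obtain ⟨i, hi⟩ := exists_isLeftDescent hσ
    have := invCount_sT_mul_of_isLeftDescent hi
    obtain ⟨w, hw⟩ := ih _ (by omega) (sT n i * σ) rfl
    exact ⟨i :: w, isReducedWordFor_cons_iff.2 ⟨hi, hw⟩⟩

theorem exists_reducedWords_of_far {σ : Perm (Fin n)} {a a' b b' : Fin n}
    (ha : (a' : ℕ) = a + 1) (hb : (b' : ℕ) = b + 1) (hfar : (a : ℕ) + 2 ≤ b ∨ (b : ℕ) + 2 ≤ a)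
    (hda : σ⁻¹ a' < σ⁻¹ a) (hdb : σ⁻¹ b' < σ⁻¹ b) :
    ∃ x y : List ℕ, IsReducedWordFor n σ (a :: x) ∧ IsReducedWordFor n σ (b :: y) ∧
      ∀ f, piWord n (a :: x) f = piWord n (b :: y) f := by
  have hsb : swap a a' b = b := Fin.swap_apply_of_val_ne (by omega) (by omega)
  have hsb' : swap a a' b' = b' := Fin.swap_apply_of_val_ne (by omega) (by omega)
  have hta : swap b b' a = a := Fin.swap_apply_of_val_ne (by omega) (by omega)
  have hta' : swap b b' a' = a' := Fin.swap_apply_of_val_ne (by omega) (by omega)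
  have hst : swap a a' * swap b b' = swap b b' * swap a a' :=
    (Perm.disjoint_swap_swap (by simp [Fin.ext_iff]; omega)).commute.eq
  obtain ⟨t, ht⟩ := exists_isReducedWordFor (swap b b' * (swap a a' * σ))
  refine ⟨b :: t, a :: t, ?_, ?_, fun f => piOp_comm ha hb hfar _⟩ <;>
    simp only [isReducedWordFor_cons_iff, sT_eq_swap ha, sT_eq_swap hb, isLeftDescent_iff ha,
      isLeftDescent_iff hb, mul_inv_rev, swap_inv, Perm.mul_apply, hsb, hsb', hta, hta']
  · exact ⟨hda, hdb, ht⟩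
  · exact ⟨hdb, hda, by rwa [← mul_assoc, hst, mul_assoc]⟩

theorem exists_reducedWords_of_adjacent {σ : Perm (Fin n)} {p q r : Fin n}
    (hpq : (q : ℕ) = p + 1) (hqr : (r : ℕ) = q + 1) (hp : σ⁻¹ q < σ⁻¹ p) (hq : σ⁻¹ r < σ⁻¹ q) :
    ∃ x y : List ℕ, IsReducedWordFor n σ (p :: x) ∧ IsReducedWordFor n σ (q :: y) ∧
      ∀ f, piWord n (p :: x) f = piWord n (q :: y) f := by
  have hsr : swap p q r = r := Fin.swap_apply_of_val_ne (by omega) (by omega)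
  have htp : swap q r p = p := Fin.swap_apply_of_val_ne (by omega) (by omega)
  have hbraid := swap_braid (Fin.ne_of_val_ne (by omega) : p ≠ q)
    (Fin.ne_of_val_ne (by omega) : p ≠ r) (Fin.ne_of_val_ne (by omega) : q ≠ r)
  obtain ⟨t, ht⟩ := exists_isReducedWordFor (swap p q * (swap q r * (swap p q * σ)))
  refine ⟨q :: p :: t, p :: q :: t, ?_, ?_, fun f => piOp_braid hpq hqr _⟩ <;>
    simp only [isReducedWordFor_cons_iff, sT_eq_swap hpq, sT_eq_swap hqr, isLeftDescent_iff hpq,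
      isLeftDescent_iff hqr, mul_inv_rev, swap_inv, Perm.mul_apply, swap_apply_left,
      swap_apply_right, hsr, htp]
  · exact ⟨hp, hq.trans hp, hq, ht⟩
  · exact ⟨hq, hq.trans hp, hp, by simpa only [← mul_assoc, hbraid] using ht⟩

theorem exists_reducedWords_of_isLeftDescent {σ : Perm (Fin n)} {i j : ℕ}
    (hi : IsLeftDescent σ i) (hj : IsLeftDescent σ j) :
    ∃ x y : List ℕ, IsReducedWordFor n σ (i :: x) ∧ IsReducedWordFor n σ (j :: y) ∧
      ∀ f, piWord n (i :: x) f = piWord n (j :: y) f := by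
  obtain ⟨a, a', rfl, ha, hda⟩ := id hi
  obtain ⟨b, b', rfl, hb, hdb⟩ := id hj
  rcases (by omega : (a : ℕ) = b ∨ ((a : ℕ) + 2 ≤ b ∨ (b : ℕ) + 2 ≤ a) ∨ (b : ℕ) = a + 1 ∨
      (a : ℕ) = b + 1) with hab | hfar | hab | hab
  · obtain rfl : a = b := Fin.ext hab
    obtain ⟨t, ht⟩ := exists_isReducedWordFor (sT n a * σ)
    have h := isReducedWordFor_cons_iff.2 ⟨hi, ht⟩
    exact ⟨t, t, h, h, fun _ => rfl⟩
  · exact exists_reducedWords_of_far ha hb hfar hda hdb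
  · obtain rfl : b = a' := Fin.ext (by omega)
    exact exists_reducedWords_of_adjacent ha hb hda hdb
  · obtain rfl : a = b' := Fin.ext (by omega)
    obtain ⟨x, y, hx, hy, hxy⟩ := exists_reducedWords_of_adjacent hb ha hdb hda
    exact ⟨y, x, hy, hx, fun f => (hxy f).symm⟩

theorem piWord_eq_of_isReducedWordFor {σ : Perm (Fin n)} {w₁ w₂ : List ℕ}
    (h₁ : IsReducedWordFor n σ w₁) (h₂ : IsReducedWordFor n σ w₂) (f : MvPolynomial (Fin n) ℚ) :
    piWord n w₁ f = piWord n w₂ f := by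
  induction hm : invCount σ using Nat.strong_induction_on generalizing σ w₁ w₂ with
  | _ m ih =>
  have hlen : w₁.length = w₂.length := h₁.2.2.trans h₂.2.2.symm
  rcases w₁ with _ | ⟨i, u⟩ <;> rcases w₂ with _ | ⟨j, v⟩
  · rfl
  · simp at hlen
  · simp at hlen
  obtain ⟨hi, hu⟩ := isReducedWordFor_cons_iff.1 h₁
  obtain ⟨hj, hv⟩ := isReducedWordFor_cons_iff.1 h₂
  obtain ⟨x, y, hx, hy, hxy⟩ := exists_reducedWords_of_isLeftDescent hi hj
  have hmi := invCount_sT_mul_of_isLeftDescent hi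
  have hmj := invCount_sT_mul_of_isLeftDescent hj
  calc piOp n i (piWord n u f)
      = piOp n i (piWord n x f) := by
        rw [ih _ (by omega) hu (isReducedWordFor_cons_iff.1 hx).2 rfl]
    _ = piOp n j (piWord n y f) := hxy f
    _ = piOp n j (piWord n v f) := by
        rw [ih _ (by omega) hv (isReducedWordFor_cons_iff.1 hy).2 rfl]

end

theorem piWord_welldefined_general (n : ℕ) (σ : Equiv.Perm (Fin n))
    (w₁ w₂ : List ℕ) (h₁ : IsReducedWordFor n σ w₁) (h₂ : IsReducedWordFor n σ w₂)
    (f : MvPolynomial (Fin n) ℚ) :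
    piWord n w₁ f = piWord n w₂ f :=
  piWord_eq_of_isReducedWordFor h₁ h₂ f

/-- If `w₁` and `w₂` are two reduced words for the same permutation `σ ∈ S_n`, then the
corresponding composites of Demazure operators coincide; hence `π_σ` is well defined. -/
theorem piWord_welldefined (n : ℕ) (hn : 2 ≤ n) (σ : Equiv.Perm (Fin n))
    (w₁ w₂ : List ℕ) (h₁ : IsReducedWordFor n σ w₁) (h₂ : IsReducedWordFor n σ w₂)
    (f : MvPolynomial (Fin n) ℚ) :
    piWord n w₁ f = piWord n w₂ f :=
  piWord_welldefined_general n σ w₁ w₂ h₁ h₂ f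
end

section
/- There exists a polynomial p ∈ ℚ[x] such that p(k) = Σ_{j=1}^{k+1} j^{20} for every integer k ≥ 0, and this polynomial p has at least one negative coefficient. Consequently, the face F_{20} of the Gelfand–Tsetlin polytope GT((1^{20}, 0^{21})), whose Ehrhart polynomial is i(F_{20}, k) = Σ_{j=1}^{k+1} j^{20}, has an Ehrhart polynomial with a negative coefficient. -/
/-!
The polynomial is `x ↦ S(x + 1)` for Faulhaber's polynomial `S(N) = ∑_{j ≤ N} j ^ 20`, written
out explicitly. It is pinned down by `p(0) = 1` and `p(x + 1) = p(x) + (x + 2) ^ 20`, an identity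
of polynomials that ring normalisation checks, and its linear coefficient `p'(0) = S'(1)` is
`-168011/330`.
-/

open Polynomial

theorem Polynomial.eval_natCast_eq_sum_Icc {R : Type*} [CommSemiring R] (p : R[X]) (f : ℕ → R)
    (h_zero : p.eval 0 = f 1) (h_succ : ∀ k : ℕ, p.eval ((k : R) + 1) = p.eval (k : R) + f (k + 2))
    (k : ℕ) : p.eval (k : R) = ∑ j ∈ Finset.Icc 1 (k + 1), f j := by
  induction k with
  | zero => simpa using h_zero
  | succ k ih => rw [Finset.sum_Icc_succ_top (by omega), ← ih, Nat.cast_succ, h_succ]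

noncomputable def sumPowTwentyShifted : ℚ[X] :=
  C (1/21) * X ^ 21 + C (3/2) * X ^ 20 + C (65/3) * X ^ 19 + C 190 * X ^ 18 + C (2261/2) * X ^ 17
    + C 4845 * X ^ 16 + C (326876/21) * X ^ 15 + C 38760 * X ^ 14 + C 77197 * X ^ 13
    + C 125970 * X ^ 12 + C (5584670/33) * X ^ 11 + C 184756 * X ^ 10 + C (10358287/63) * X ^ 9
    + C 125970 * X ^ 8 + C 83980 * X ^ 7 + C 38760 * X ^ 6 + C (86317/10) * X ^ 5 + C 4845 * X ^ 4
    + C (291155/63) * X ^ 3 + C 190 * X ^ 2 + C (-168011/330) * X + C 1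

theorem sumPowTwentyShifted_eval_zero : sumPowTwentyShifted.eval 0 = 1 := by
  simp [sumPowTwentyShifted]

theorem sumPowTwentyShifted_eval_add_one (x : ℚ) :
    sumPowTwentyShifted.eval (x + 1) = sumPowTwentyShifted.eval x + (x + 2) ^ 20 := by
  simp only [sumPowTwentyShifted, eval_add, eval_mul, eval_pow, eval_C, eval_X]
  ring

theorem sumPowTwentyShifted_coeff_one : sumPowTwentyShifted.coeff 1 = -168011/330 := by
  simp only [sumPowTwentyShifted, coeff_add, coeff_C_mul, coeff_X_pow, coeff_X, coeff_C]
  norm_num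

/-- The unique polynomial `p ∈ ℚ[x]` with `p(k) = 1^20 + 2^20 + ⋯ + (k+1)^20` for all
integers `k ≥ 0` — the Ehrhart polynomial of the face `F₂₀` of the Gelfand–Tsetlin
polytope `GT((1^20, 0^21))` — has a negative coefficient. -/
theorem ehrhart_of_gt_face_has_negative_coefficient :
    ∃ p : Polynomial ℚ,
      (∀ k : ℕ, p.eval (k : ℚ) = ∑ j ∈ Finset.Icc 1 (k + 1), (j : ℚ) ^ 20) ∧
      ∃ i : ℕ, p.coeff i < 0 := by
  refine ⟨sumPowTwentyShifted, ?_, 1, ?_⟩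
  · refine eval_natCast_eq_sum_Icc _ (fun j ↦ (j : ℚ) ^ 20) ?_ fun k ↦ ?_
    · simpa using sumPowTwentyShifted_eval_zero
    · rw [sumPowTwentyShifted_eval_add_one]
      push_cast
      ring
  · rw [sumPowTwentyShifted_coeff_one]
    norm_num
end
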